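/- arXiv:2507.18466 — 3 statements merged into one kernel-verified Lean document; each statement's English description precedes it below -/
import Mathlib

section
/- Let A ∈ ℝ^{m×n} have rank n and A_p := A R⁻¹ for invertible R ∈ ℝ^{n×n}. Then for each 1 ≤ j ≤ n, σ_n(A_p)·σ_j(A) ≤ σ_j(A_pᵀ A) ≤ σ_1(A_p)·σ_j(A); consequently κ(A_pᵀ A) ≤ κ(A_p)·κ(A). -/
open Matrix
open scoped Matrix.Norms.L2Operator

/-- The `j`-th largest singular value of a real matrix. -/
noncomputable def sval {m n : ℕ} (M : Matrix (Fin m) (Fin n) ℝ) (j : Fin n) : ℝ :=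
  Real.sqrt ((((Finset.univ.val.map
    (Matrix.isHermitian_conjTranspose_mul_self M).eigenvalues).sort (· ≥ ·)).getD j 0))

/-- Two-norm condition number `σ₁ / σₙ`. -/
noncomputable def condNum {m n : ℕ} (M : Matrix (Fin m) (Fin (n+1)) ℝ) : ℝ :=
  sval M 0 / sval M (Fin.last n)

/-- Euclidean norm of a vector. -/
noncomputable def e2norm {k : ℕ} (x : Fin k → ℝ) : ℝ := Real.sqrt (∑ i, (x i)^2)

open Finset Module

noncomputable def sortedEig {k : ℕ} {M : Matrix (Fin k) (Fin k) ℝ} (hM : M.IsHermitian)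
    (j : Fin k) : ℝ :=
  (((Finset.univ.val.map hM.eigenvalues).sort (· ≥ ·)).getD j 0)

lemma exists_sort_perm {k : ℕ} (f : Fin k → ℝ) :
    ∃ σ : Equiv.Perm (Fin k), Antitone (f ∘ σ) ∧
      ∀ i : Fin k, ((Finset.univ.val.map f).sort (· ≥ ·)).getD i 0 = f (σ i) := by
  refine ⟨(Fin.revPerm).trans (Tuple.sort f), ?_, ?_⟩
  · intro i j hij
    exact Tuple.monotone_sort f (by simpa [Fin.rev_le_rev] using hij)
  · have hperm : ((Finset.univ.val.map f).sort (· ≥ ·) : Multiset ℝ)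
        = ↑(List.ofFn (f ∘ (Fin.revPerm.trans (Tuple.sort f)))) := by
      rw [Multiset.sort_eq]
      have h1 : (Finset.univ.val.map (f ∘ (Fin.revPerm.trans (Tuple.sort f))))
          = Finset.univ.val.map f := by
        rw [← Multiset.map_map]
        congr 1
        exact congrArg Finset.val (Finset.map_univ_equiv (Fin.revPerm.trans (Tuple.sort f)))
      rw [Fin.univ_val_map] at h1
      exact h1.symm
    have heq : ((Finset.univ.val.map f).sort (· ≥ ·))
        = List.ofFn (f ∘ (Fin.revPerm.trans (Tuple.sort f))) := by
      have inst : IsAntisymm ℝ (· ≥ ·) := ⟨fun _ _ h h' => le_antisymm h' h⟩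
      apply List.Perm.eq_of_pairwise (fun a b _ _ h h' => le_antisymm h' h) ?_ ?_ (Multiset.coe_eq_coe.mp hperm)
      · exact Multiset.pairwise_sort _ _
      · rw [List.pairwise_ofFn]
        intro i j hij
        exact Tuple.monotone_sort f (by simpa [Fin.rev_le_rev] using hij.le)
    intro i
    have hlen : i.1 < (((Finset.univ.val.map f).sort (· ≥ ·))).length := by
      rw [Multiset.length_sort]; simp [i.isLt]
    rw [heq] at hlen ⊢
    rw [List.getD_eq_getElem _ _ hlen]
    simp

lemma quad_eq {E : Type*} [NormedAddCommGroup E] [InnerProductSpace ℝ E] {r : ℕ} (T : E →ₗ[ℝ] E) (f : Fin r → E) (hf : Orthonormal ℝ f)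
    (μ : Fin r → ℝ) (hT : ∀ i, T (f i) = μ i • f i) (a : Fin r → ℝ) :
    inner (𝕜 := ℝ) (∑ i, a i • f i) (T (∑ i, a i • f i)) = ∑ i, μ i * a i ^ 2 := by
  rw [map_sum]
  simp_rw [_root_.map_smul, hT, smul_smul, sum_inner, inner_sum, real_inner_smul_left,
    real_inner_smul_right, orthonormal_iff_ite.mp hf]
  simp [mul_ite, Finset.sum_ite_eq']
  congr 1; ext i; ring

lemma norm_sq_eq {E : Type*} [NormedAddCommGroup E] [InnerProductSpace ℝ E] {r : ℕ} (f : Fin r → E) (hf : Orthonormal ℝ f) (a : Fin r → ℝ) :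
    ‖∑ i, a i • f i‖ ^ 2 = ∑ i, a i ^ 2 := by
  have := quad_eq (LinearMap.id) f hf (fun _ => 1) (by simp) a
  simpa [real_inner_self_eq_norm_sq] using this

lemma inner_toEuclideanLin {k : ℕ} (M : Matrix (Fin k) (Fin k) ℝ)
    (w : EuclideanSpace ℝ (Fin k)) :
    inner (𝕜 := ℝ) w (Matrix.toEuclideanLin M w)
      = (WithLp.equiv 2 _ w) ⬝ᵥ (M *ᵥ (WithLp.equiv 2 _ w)) := by
  simp [PiLp.inner_apply, dotProduct, toEuclideanLin_apply, RCLike.inner_apply, mul_comm]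

lemma exists_subspaces {k : ℕ} {X : Matrix (Fin k) (Fin k) ℝ} (hX : X.IsHermitian) (j : Fin k) :
    ∃ U V : Submodule ℝ (EuclideanSpace ℝ (Fin k)),
      finrank ℝ U = j.1 + 1 ∧ finrank ℝ V = k - j.1 ∧
      (∀ w ∈ U, sortedEig hX j * ‖w‖ ^ 2 ≤ inner (𝕜 := ℝ) w ((Matrix.toEuclideanLin X) w)) ∧
      (∀ w ∈ V, inner (𝕜 := ℝ) w ((Matrix.toEuclideanLin X) w) ≤ sortedEig hX j * ‖w‖ ^ 2) := by
  obtain ⟨σ, hanti, hget⟩ := exists_sort_perm hX.eigenvalues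
  set b := hX.eigenvectorBasis with hb
  have hTb : ∀ i, Matrix.toEuclideanLin X (b i) = hX.eigenvalues i • b i := by
    intro i
    exact congrArg (WithLp.toLp 2) (hX.mulVec_eigenvectorBasis i)
  have hd : sortedEig hX j = hX.eigenvalues (σ j) := hget j
  -- top family
  let g : Fin (j.1 + 1) → Fin k := fun i => σ (Fin.castLE j.isLt i)
  have hginj : Function.Injective g :=
    σ.injective.comp (Fin.castLE_injective _)
  let f : Fin (j.1 + 1) → EuclideanSpace ℝ (Fin k) := fun i => b (g i)
  have hforth : Orthonormal ℝ f := (b.orthonormal).comp g hginj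
  -- bottom family
  let g' : Fin (k - j.1) → Fin k := fun i => ⟨j.1 + i.1, by omega⟩
  have hg'inj : Function.Injective g' := by
    intro x y hxy
    have : j.1 + x.1 = j.1 + y.1 := congrArg Fin.val hxy
    exact Fin.ext (by omega)
  let f' : Fin (k - j.1) → EuclideanSpace ℝ (Fin k) := fun i => b (σ (g' i))
  have hf'orth : Orthonormal ℝ f' := (b.orthonormal).comp _ (σ.injective.comp hg'inj)
  refine ⟨Submodule.span ℝ (Set.range f), Submodule.span ℝ (Set.range f'), ?_, ?_, ?_, ?_⟩
  · rw [finrank_span_eq_card hforth.linearIndependent]; simp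
  · rw [finrank_span_eq_card hf'orth.linearIndependent]; simp
  · intro w hw
    obtain ⟨a, rfl⟩ := (Submodule.mem_span_range_iff_exists_fun ℝ).mp hw
    rw [quad_eq _ f hforth (fun i => hX.eigenvalues (g i)) (fun i => hTb (g i)) a,
      norm_sq_eq f hforth a, Finset.mul_sum]
    apply Finset.sum_le_sum
    intro i _
    have : sortedEig hX j ≤ hX.eigenvalues (g i) := by
      rw [hd]
      exact hanti (show Fin.castLE j.isLt i ≤ j from Fin.le_def.mpr (by
        have := i.isLt; simp [Fin.castLE]; omega))
    exact mul_le_mul_of_nonneg_right this (sq_nonneg _)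
  · intro w hw
    obtain ⟨a, rfl⟩ := (Submodule.mem_span_range_iff_exists_fun ℝ).mp hw
    rw [quad_eq _ f' hf'orth (fun i => hX.eigenvalues (σ (g' i))) (fun i => hTb (σ (g' i))) a,
      norm_sq_eq f' hf'orth a, Finset.mul_sum]
    apply Finset.sum_le_sum
    intro i _
    have : hX.eigenvalues (σ (g' i)) ≤ sortedEig hX j := by
      rw [hd]
      exact hanti (show j ≤ g' i from Fin.le_def.mpr (by simp [g']))
    exact mul_le_mul_of_nonneg_right this (sq_nonneg _)

lemma exists_ne_zero_inf {k : ℕ} (U V : Submodule ℝ (EuclideanSpace ℝ (Fin k)))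
    (h : k < finrank ℝ U + finrank ℝ V) : ∃ w : EuclideanSpace ℝ (Fin k), w ∈ U ⊓ V ∧ w ≠ 0 := by
  have hsum := Submodule.finrank_sup_add_finrank_inf_eq U V
  have h1 : finrank ℝ ↥(U ⊔ V) ≤ k := by
    have := Submodule.finrank_le (U ⊔ V)
    simpa [finrank_euclideanSpace] using this
  have h2 : 0 < finrank ℝ ↥(U ⊓ V) := by omega
  haveI := Module.nontrivial_of_finrank_pos (R := ℝ) h2
  obtain ⟨x, hx⟩ := exists_ne (0 : ↥(U ⊓ V))
  exact ⟨x, x.2, by simpa [Submodule.coe_eq_zero] using hx⟩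

lemma key_le {k : ℕ} {X Y : Matrix (Fin k) (Fin k) ℝ} (hX : X.IsHermitian) (hY : Y.IsHermitian)
    {c : ℝ} (hc : 0 ≤ c)
    (h : ∀ v : Fin k → ℝ, c * (v ⬝ᵥ X *ᵥ v) ≤ v ⬝ᵥ Y *ᵥ v) (j : Fin k) :
    c * sortedEig hX j ≤ sortedEig hY j := by
  obtain ⟨U, -, hU, -, hUb, -⟩ := exists_subspaces hX j
  obtain ⟨-, V, -, hV, -, hVb⟩ := exists_subspaces hY j
  obtain ⟨w, hw, hw0⟩ := exists_ne_zero_inf U V (by have := j.isLt; omega)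
  have hnorm : (0:ℝ) < ‖w‖ ^ 2 := by have := norm_pos_iff.mpr hw0; positivity
  have c1 : c * (sortedEig hX j * ‖w‖ ^ 2) ≤ c * inner (𝕜 := ℝ) w ((Matrix.toEuclideanLin X) w) :=
    mul_le_mul_of_nonneg_left (hUb w hw.1) hc
  have c2 : c * inner (𝕜 := ℝ) w ((Matrix.toEuclideanLin X) w)
      ≤ inner (𝕜 := ℝ) w ((Matrix.toEuclideanLin Y) w) := by
    rw [inner_toEuclideanLin, inner_toEuclideanLin]
    exact h _
  have c3 := hVb w hw.2
  have : (c * sortedEig hX j) * ‖w‖ ^ 2 ≤ sortedEig hY j * ‖w‖ ^ 2 := by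
    calc (c * sortedEig hX j) * ‖w‖ ^ 2 = c * (sortedEig hX j * ‖w‖ ^ 2) := by ring
    _ ≤ _ := le_trans c1 (le_trans c2 c3)
  exact le_of_mul_le_mul_right this hnorm

lemma key_ge {k : ℕ} {X Y : Matrix (Fin k) (Fin k) ℝ} (hX : X.IsHermitian) (hY : Y.IsHermitian)
    {c : ℝ} (hc : 0 ≤ c)
    (h : ∀ v : Fin k → ℝ, v ⬝ᵥ Y *ᵥ v ≤ c * (v ⬝ᵥ X *ᵥ v)) (j : Fin k) :
    sortedEig hY j ≤ c * sortedEig hX j := by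
  obtain ⟨U, -, hU, -, hUb, -⟩ := exists_subspaces hY j
  obtain ⟨-, V, -, hV, -, hVb⟩ := exists_subspaces hX j
  obtain ⟨w, hw, hw0⟩ := exists_ne_zero_inf U V (by have := j.isLt; omega)
  have hnorm : (0:ℝ) < ‖w‖ ^ 2 := by have := norm_pos_iff.mpr hw0; positivity
  have c1 := hUb w hw.1
  have c2 : inner (𝕜 := ℝ) w ((Matrix.toEuclideanLin Y) w)
      ≤ c * inner (𝕜 := ℝ) w ((Matrix.toEuclideanLin X) w) := by
    rw [inner_toEuclideanLin, inner_toEuclideanLin]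
    exact h _
  have c3 : c * inner (𝕜 := ℝ) w ((Matrix.toEuclideanLin X) w)
      ≤ c * (sortedEig hX j * ‖w‖ ^ 2) :=
    mul_le_mul_of_nonneg_left (hVb w hw.2) hc
  have : sortedEig hY j * ‖w‖ ^ 2 ≤ (c * sortedEig hX j) * ‖w‖ ^ 2 := by
    calc sortedEig hY j * ‖w‖ ^ 2 ≤ c * (sortedEig hX j * ‖w‖ ^ 2) :=
      le_trans c1 (le_trans c2 c3)
    _ = (c * sortedEig hX j) * ‖w‖ ^ 2 := by ring
  exact le_of_mul_le_mul_right this hnorm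

lemma pp_bounds {k : ℕ} {P : Matrix (Fin k) (Fin k) ℝ} (hP : P.IsHermitian)
    (hpsd : ∀ i, 0 ≤ hP.eigenvalues i) {cmin cmax : ℝ}
    (hmin : ∀ i, cmin ≤ hP.eigenvalues i) (hmax : ∀ i, hP.eigenvalues i ≤ cmax)
    (v : Fin k → ℝ) :
    cmin * (v ⬝ᵥ P *ᵥ v) ≤ v ⬝ᵥ (P * P) *ᵥ v ∧ v ⬝ᵥ (P * P) *ᵥ v ≤ cmax * (v ⬝ᵥ P *ᵥ v) := by
  set b := hP.eigenvectorBasis with hb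
  set w : EuclideanSpace ℝ (Fin k) := (WithLp.equiv 2 _).symm v with hw
  have hTb : ∀ i, Matrix.toEuclideanLin P (b i) = hP.eigenvalues i • b i := fun i =>
    congrArg (WithLp.toLp 2) (hP.mulVec_eigenvectorBasis i)
  have hTb2 : ∀ i, Matrix.toEuclideanLin (P * P) (b i) = (hP.eigenvalues i ^ 2) • b i := by
    intro i
    show WithLp.toLp 2 ((P * P) *ᵥ ⇑(b i)) = WithLp.toLp 2 ((hP.eigenvalues i ^ 2) • ⇑(b i))
    congr 1
    rw [← Matrix.mulVec_mulVec, hP.mulVec_eigenvectorBasis, Matrix.mulVec_smul,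
      hP.mulVec_eigenvectorBasis, smul_smul, ← sq]
  have hrepr : ∑ i, b.repr w i • b i = w := b.sum_repr w
  have e1 : v ⬝ᵥ P *ᵥ v = ∑ i, hP.eigenvalues i * (b.repr w i) ^ 2 := by
    rw [← quad_eq _ b b.orthonormal _ hTb (fun i => b.repr w i), hrepr, inner_toEuclideanLin]
    rfl
  have e2 : v ⬝ᵥ (P * P) *ᵥ v = ∑ i, hP.eigenvalues i ^ 2 * (b.repr w i) ^ 2 := by
    rw [← quad_eq _ b b.orthonormal _ hTb2 (fun i => b.repr w i), hrepr, inner_toEuclideanLin]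
    rfl
  rw [e1, e2, Finset.mul_sum, Finset.mul_sum]
  constructor
  · apply Finset.sum_le_sum
    intro i _
    have : cmin * hP.eigenvalues i ≤ hP.eigenvalues i ^ 2 := by
      rw [sq]
      exact mul_le_mul_of_nonneg_right (hmin i) (hpsd i)
    calc cmin * (hP.eigenvalues i * b.repr w i ^ 2) = (cmin * hP.eigenvalues i) * b.repr w i ^ 2 := by ring
    _ ≤ hP.eigenvalues i ^ 2 * b.repr w i ^ 2 := mul_le_mul_of_nonneg_right this (sq_nonneg _)
  · apply Finset.sum_le_sum
    intro i _
    have : hP.eigenvalues i ^ 2 ≤ cmax * hP.eigenvalues i := by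
      rw [sq]
      exact mul_le_mul_of_nonneg_right (hmax i) (hpsd i)
    calc hP.eigenvalues i ^ 2 * b.repr w i ^ 2 ≤ (cmax * hP.eigenvalues i) * b.repr w i ^ 2 :=
      mul_le_mul_of_nonneg_right this (sq_nonneg _)
    _ = cmax * (hP.eigenvalues i * b.repr w i ^ 2) := by ring

lemma mulVec_inj_of_rank {m k : ℕ} (A : Matrix (Fin m) (Fin k) ℝ) (h : A.rank = k) :
    Function.Injective A.mulVec := by
  have h1 := LinearMap.finrank_range_add_finrank_ker A.mulVecLin
  have h2 : finrank ℝ (Fin k → ℝ) = k := by simp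
  rw [h2] at h1
  rw [Matrix.rank] at h
  have hker : LinearMap.ker A.mulVecLin = ⊥ := Submodule.finrank_eq_zero.mp (by omega)
  exact LinearMap.ker_eq_bot.mp hker

lemma posdef_of_inj {m k : ℕ} (A : Matrix (Fin m) (Fin k) ℝ)
    (hinj : Function.Injective A.mulVec) : (Aᵀ * A).PosDef := by
  refine Matrix.PosDef.of_dotProduct_mulVec_pos (Matrix.isHermitian_conjTranspose_mul_self A) fun x hx => ?_
  have hstar : star x = x := by
    funext i; simp
  rw [hstar, ← Matrix.mulVec_mulVec, Matrix.dotProduct_mulVec, Matrix.vecMul_transpose]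
  have hne : A *ᵥ x ≠ 0 := fun hh => hx (hinj (by rw [hh, Matrix.mulVec_zero]))
  have h0 : 0 ≤ (A *ᵥ x) ⬝ᵥ (A *ᵥ x) := Finset.sum_nonneg fun i _ => mul_self_nonneg _
  exact lt_of_le_of_ne h0 (Ne.symm fun hh => hne (dotProduct_self_eq_zero.mp hh))

theorem stmt4 {m n : ℕ} (A : Matrix (Fin m) (Fin (n+1)) ℝ)
    (R : Matrix (Fin (n+1)) (Fin (n+1)) ℝ)
    (hrank : A.rank = n + 1) (hR : IsUnit R.det)
    (Ap : Matrix (Fin m) (Fin (n+1)) ℝ) (hAp : Ap = A * R⁻¹) :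
    (∀ j : Fin (n+1),
      sval Ap (Fin.last n) * sval A j ≤ sval (Apᵀ * A) j ∧
      sval (Apᵀ * A) j ≤ sval Ap 0 * sval A j) ∧
    condNum (Apᵀ * A) ≤ condNum Ap * condNum A := by
  have hS : (Aᵀ * A).IsHermitian := Matrix.isHermitian_conjTranspose_mul_self A
  have hN : ((Apᵀ * A)ᵀ * (Apᵀ * A)).IsHermitian := Matrix.isHermitian_conjTranspose_mul_self _
  have hP : (Apᵀ * Ap).IsHermitian := Matrix.isHermitian_conjTranspose_mul_self Ap
  have hsvalA : ∀ j, sval A j = Real.sqrt (sortedEig hS j) := fun _ => rfl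
  have hsvalAp : ∀ j, sval Ap j = Real.sqrt (sortedEig hP j) := fun _ => rfl
  have hsvalM : ∀ j, sval (Apᵀ * A) j = Real.sqrt (sortedEig hN j) := fun _ => rfl
  -- algebra
  have hAe : A = Ap * R := by rw [hAp, Matrix.nonsing_inv_mul_cancel_right R A hR]
  have hS_eq : Aᵀ * A = Rᵀ * (Apᵀ * Ap) * R := by
    conv_lhs => rw [hAe]
    simp [Matrix.transpose_mul, Matrix.mul_assoc]
  have hM_eq : Apᵀ * A = (Apᵀ * Ap) * R := by
    conv_lhs => rw [hAe]
    rw [Matrix.mul_assoc]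
  have hN_eq : (Apᵀ * A)ᵀ * (Apᵀ * A) = Rᵀ * ((Apᵀ * Ap) * (Apᵀ * Ap)) * R := by
    rw [hM_eq, Matrix.transpose_mul, Matrix.transpose_mul, Matrix.transpose_transpose]
    simp [Matrix.mul_assoc]
  have hconv : ∀ (B : Matrix (Fin (n+1)) (Fin (n+1)) ℝ) (v : Fin (n+1) → ℝ),
      v ⬝ᵥ (Rᵀ * B * R) *ᵥ v = (R *ᵥ v) ⬝ᵥ B *ᵥ (R *ᵥ v) := by
    intro B v
    rw [← Matrix.mulVec_mulVec, ← Matrix.mulVec_mulVec, Matrix.dotProduct_mulVec,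
      Matrix.vecMul_transpose]
  -- injectivity / positivity
  have hAinj : Function.Injective A.mulVec := mulVec_inj_of_rank A hrank
  have hApinj : Function.Injective Ap.mulVec := by
    have hRinv : Function.Injective (R⁻¹).mulVec := by
      intro x y hxy
      have := congrArg (fun u => R *ᵥ u) hxy
      simpa [Matrix.mulVec_mulVec, Matrix.mul_nonsing_inv R hR, Matrix.one_mulVec] using this
    intro x y hxy
    apply hRinv
    apply hAinj
    simpa [hAp, ← Matrix.mulVec_mulVec] using hxy
  have hSpd := posdef_of_inj A hAinj
  have hPpd := posdef_of_inj Ap hApinj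
  have hSpos : ∀ i, 0 < hS.eigenvalues i := fun i => hSpd.eigenvalues_pos i
  have hPpos : ∀ i, 0 < hP.eigenvalues i := fun i => hPpd.eigenvalues_pos i
  -- sorted bounds for P
  obtain ⟨σP, hPanti, hPget⟩ := exists_sort_perm hP.eigenvalues
  obtain ⟨σS, hSanti, hSget⟩ := exists_sort_perm hS.eigenvalues
  set cmin := sortedEig hP (Fin.last n) with hcmin
  set cmax := sortedEig hP 0 with hcmax
  have hmin : ∀ i, cmin ≤ hP.eigenvalues i := by
    intro i
    have h1 : hP.eigenvalues i = (hP.eigenvalues ∘ σP) (σP.symm i) := by simp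
    rw [hcmin, sortedEig, hPget (Fin.last n), h1]
    exact hPanti (Fin.le_last _)
  have hmax : ∀ i, hP.eigenvalues i ≤ cmax := by
    intro i
    have h1 : hP.eigenvalues i = (hP.eigenvalues ∘ σP) (σP.symm i) := by simp
    rw [hcmax, sortedEig, hPget 0, h1]
    exact hPanti (Fin.zero_le _)
  have hcmin_pos : 0 < cmin := by
    rw [hcmin, sortedEig, hPget (Fin.last n)]; exact hPpos _
  have hcmax_pos : 0 < cmax := lt_of_lt_of_le hcmin_pos (by
    rw [hcmin, hcmax, sortedEig, sortedEig, hPget (Fin.last n), hPget 0]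
    exact hPanti (Fin.zero_le _))
  have hSsorted_pos : ∀ j, 0 < sortedEig hS j := by
    intro j
    rw [sortedEig, hSget j]; exact hSpos _
  -- eigenvalue inequalities
  have hlow : ∀ j, cmin * sortedEig hS j ≤ sortedEig hN j := by
    apply key_le hS hN hcmin_pos.le
    intro v
    rw [hS_eq, hN_eq, hconv, hconv]
    exact (pp_bounds hP (fun i => (hPpos i).le) hmin hmax _).1
  have hhigh : ∀ j, sortedEig hN j ≤ cmax * sortedEig hS j := by
    apply key_ge hS hN hcmax_pos.le
    intro v
    rw [hS_eq, hN_eq, hconv, hconv]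
    exact (pp_bounds hP (fun i => (hPpos i).le) hmin hmax _).2
  have part1 : ∀ j : Fin (n+1),
      sval Ap (Fin.last n) * sval A j ≤ sval (Apᵀ * A) j ∧
      sval (Apᵀ * A) j ≤ sval Ap 0 * sval A j := by
    intro j
    constructor
    · rw [hsvalAp, hsvalA, hsvalM, ← Real.sqrt_mul hcmin_pos.le]
      exact Real.sqrt_le_sqrt (hlow j)
    · rw [hsvalAp, hsvalA, hsvalM, ← Real.sqrt_mul hcmax_pos.le]
      exact Real.sqrt_le_sqrt (hhigh j)
  refine ⟨part1, ?_⟩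
  have hApl_pos : 0 < sval Ap (Fin.last n) := by
    rw [hsvalAp]; exact Real.sqrt_pos.mpr hcmin_pos
  have hAl_pos : 0 < sval A (Fin.last n) := by
    rw [hsvalA]; exact Real.sqrt_pos.mpr (hSsorted_pos _)
  have hrhs : condNum Ap * condNum A
      = (sval Ap 0 * sval A 0) / (sval Ap (Fin.last n) * sval A (Fin.last n)) := by
    rw [condNum, condNum, div_mul_div_comm]
  rw [hrhs, condNum]
  apply div_le_div₀
  · rw [hsvalAp, hsvalA]; positivity
  · exact (part1 0).2
  · positivity
  · exact (part1 (Fin.last n)).1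
end

section
/- Let A_p, E_A ∈ ℝ^{m×n} and A ∈ ℝ^{m×n} with A_pᵀA nonsingular, let x* solve A_pᵀA x = A_pᵀ b, let E_p ∈ ℝ^{m×n}, ε := max{‖E_p‖/‖A_p‖, ‖E_A‖/‖A‖}, and suppose x̂ ≠ 0 satisfies (A_p+E_p)ᵀ(A+E_A) x̂ = (A_p+E_p)ᵀ b. Then ‖x* - x̂‖/‖x̂‖ ≤ κ(A_pᵀA) · ν · ε · ( ‖b - A x̂‖/(‖A‖‖x̂‖) + 1 + ε ), where ν := ‖A_p‖‖A‖/‖A_pᵀA‖ and κ(A_pᵀA) := ‖A_pᵀA‖·‖(A_pᵀA)⁻¹‖. -/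
open Matrix
open scoped Matrix.Norms.L2Operator

private lemma e2norm_eq {k : ℕ} (x : Fin k → ℝ) :
    e2norm x = ‖(EuclideanSpace.equiv (Fin k) ℝ).symm x‖ := by
  rw [EuclideanSpace.norm_eq]
  simp [e2norm, sq_abs]

private lemma e2norm_nonneg {k : ℕ} (x : Fin k → ℝ) : 0 ≤ e2norm x :=
  Real.sqrt_nonneg _

private lemma e2norm_pos {k : ℕ} {x : Fin k → ℝ} (hx : x ≠ 0) : 0 < e2norm x := by
  rw [e2norm_eq]
  exact norm_pos_iff.mpr (by simpa using hx)

private lemma e2norm_add_le {k : ℕ} (x y : Fin k → ℝ) :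
    e2norm (x + y) ≤ e2norm x + e2norm y := by
  simp only [e2norm_eq, map_add]
  exact norm_add_le _ _

private lemma e2norm_sub_le {k : ℕ} (x y : Fin k → ℝ) :
    e2norm (x - y) ≤ e2norm x + e2norm y := by
  simp only [e2norm_eq, map_sub]
  exact norm_sub_le _ _

private lemma e2norm_mulVec_le {p q : ℕ} (B : Matrix (Fin p) (Fin q) ℝ) (x : Fin q → ℝ) :
    e2norm (B *ᵥ x) ≤ ‖B‖ * e2norm x := by
  rw [e2norm_eq, e2norm_eq]
  exact B.l2_opNorm_mulVec ((EuclideanSpace.equiv (Fin q) ℝ).symm x)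

private lemma l2_norm_transpose {p q : ℕ} (B : Matrix (Fin p) (Fin q) ℝ) : ‖Bᵀ‖ = ‖B‖ := by
  rw [← Matrix.conjTranspose_eq_transpose_of_trivial, Matrix.l2_opNorm_conjTranspose]

theorem stmt11 {m n : ℕ} (Ap A EA Ep : Matrix (Fin m) (Fin n) ℝ)
    (b : Fin m → ℝ) (hinv : IsUnit (Apᵀ * A).det)
    (xs xh : Fin n → ℝ) (hxs : (Apᵀ * A) *ᵥ xs = Apᵀ *ᵥ b)
    (ε : ℝ) (hε : ε = max (‖Ep‖ / ‖Ap‖) (‖EA‖ / ‖A‖))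
    (hxh : ((Ap + Ep)ᵀ * (A + EA)) *ᵥ xh = (Ap + Ep)ᵀ *ᵥ b) (hne : xh ≠ 0)
    (ν κ : ℝ) (hν : ν = ‖Ap‖ * ‖A‖ / ‖Apᵀ * A‖)
    (hκ : κ = ‖Apᵀ * A‖ * ‖(Apᵀ * A)⁻¹‖) :
    e2norm (xs - xh) / e2norm xh ≤
      κ * ν * ε * (e2norm (b - A *ᵥ xh) / (‖A‖ * e2norm xh) + 1 + ε) := by
  rcases Nat.eq_zero_or_pos n with rfl | hn
  · exact absurd (funext fun i => i.elim0) hne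
  haveI : Nonempty (Fin n) := ⟨⟨0, hn⟩⟩
  -- basic nonvanishing facts
  have hA0 : A ≠ 0 := by rintro rfl; simp at hinv
  have hAp0 : Ap ≠ 0 := by rintro rfl; simp at hinv
  have hM0 : Apᵀ * A ≠ 0 := by
    intro h; rw [h] at hinv; simp at hinv
  have hApos : (0:ℝ) < ‖A‖ := norm_pos_iff.mpr hA0
  have hAppos : (0:ℝ) < ‖Ap‖ := norm_pos_iff.mpr hAp0
  have hMpos : (0:ℝ) < ‖Apᵀ * A‖ := norm_pos_iff.mpr hM0
  have hXpos : (0:ℝ) < e2norm xh := e2norm_pos hne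
  have hεEp : ‖Ep‖ ≤ ε * ‖Ap‖ := by
    rw [hε]; rw [← div_le_iff₀ hAppos] at *; exact le_max_left _ _
  have hεEA : ‖EA‖ ≤ ε * ‖A‖ := by
    rw [hε]; rw [← div_le_iff₀ hApos] at *; exact le_max_right _ _
  -- the key algebraic identity
  have h2 : (Apᵀ * A) *ᵥ xh + Apᵀ *ᵥ (EA *ᵥ xh) + Epᵀ *ᵥ (A *ᵥ xh) + Epᵀ *ᵥ (EA *ᵥ xh)
      = Apᵀ *ᵥ b + Epᵀ *ᵥ b := by
    have h := hxh
    simp only [Matrix.transpose_add, Matrix.add_mul, Matrix.mul_add,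
      Matrix.add_mulVec] at h
    simp only [Matrix.mulVec_mulVec]
    rw [← h]; abel
  have h3 : (Apᵀ * A) *ᵥ (xs - xh)
      = Apᵀ *ᵥ (EA *ᵥ xh) + Epᵀ *ᵥ (EA *ᵥ xh) - Epᵀ *ᵥ (b - A *ᵥ xh) := by
    rw [Matrix.mulVec_sub, hxs, Matrix.mulVec_sub]
    funext i
    have h := congrFun h2 i
    simp only [Pi.add_apply, Pi.sub_apply] at h ⊢
    linarith
  have key : xs - xh = (Apᵀ * A)⁻¹ *ᵥ
      (Apᵀ *ᵥ (EA *ᵥ xh) + Epᵀ *ᵥ (EA *ᵥ xh) - Epᵀ *ᵥ (b - A *ᵥ xh)) := by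
    rw [← h3, Matrix.mulVec_mulVec, Matrix.nonsing_inv_mul _ hinv, Matrix.one_mulVec]
  -- norm bounds
  set r : Fin m → ℝ := b - A *ᵥ xh with hr
  have hterm1 : e2norm (Apᵀ *ᵥ (EA *ᵥ xh)) ≤ ‖Ap‖ * (ε * ‖A‖) * e2norm xh := by
    calc e2norm (Apᵀ *ᵥ (EA *ᵥ xh)) ≤ ‖Apᵀ‖ * e2norm (EA *ᵥ xh) := e2norm_mulVec_le _ _
      _ ≤ ‖Apᵀ‖ * (‖EA‖ * e2norm xh) := by
          exact mul_le_mul_of_nonneg_left (e2norm_mulVec_le _ _) (norm_nonneg _)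
      _ ≤ ‖Ap‖ * (ε * ‖A‖) * e2norm xh := by
          rw [l2_norm_transpose]
          have := mul_le_mul_of_nonneg_right hεEA (e2norm_nonneg xh)
          nlinarith [e2norm_nonneg xh, norm_nonneg EA]
  have hterm2 : e2norm (Epᵀ *ᵥ (EA *ᵥ xh)) ≤ (ε * ‖Ap‖) * (ε * ‖A‖) * e2norm xh := by
    calc e2norm (Epᵀ *ᵥ (EA *ᵥ xh)) ≤ ‖Epᵀ‖ * e2norm (EA *ᵥ xh) := e2norm_mulVec_le _ _
      _ ≤ ‖Epᵀ‖ * (‖EA‖ * e2norm xh) := by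
          exact mul_le_mul_of_nonneg_left (e2norm_mulVec_le _ _) (norm_nonneg _)
      _ ≤ (ε * ‖Ap‖) * (ε * ‖A‖) * e2norm xh := by
          rw [l2_norm_transpose]
          have hε0 : 0 ≤ ε := by rw [hε]; positivity
          have hp : ‖Ep‖ * ‖EA‖ ≤ (ε * ‖Ap‖) * (ε * ‖A‖) :=
            mul_le_mul hεEp hεEA (norm_nonneg _) (by positivity)
          nlinarith [e2norm_nonneg xh, norm_nonneg EA, norm_nonneg Ep]
  have hterm3 : e2norm (Epᵀ *ᵥ r) ≤ (ε * ‖Ap‖) * e2norm r := by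
    calc e2norm (Epᵀ *ᵥ r) ≤ ‖Epᵀ‖ * e2norm r := e2norm_mulVec_le _ _
      _ ≤ (ε * ‖Ap‖) * e2norm r := by
          rw [l2_norm_transpose]
          exact mul_le_mul_of_nonneg_right hεEp (e2norm_nonneg r)
  have hmain : e2norm (xs - xh) ≤ ‖(Apᵀ * A)⁻¹‖ *
      (‖Ap‖ * (ε * ‖A‖) * e2norm xh + (ε * ‖Ap‖) * (ε * ‖A‖) * e2norm xh
        + (ε * ‖Ap‖) * e2norm r) := by
    rw [key]
    calc e2norm ((Apᵀ * A)⁻¹ *ᵥ (Apᵀ *ᵥ (EA *ᵥ xh) + Epᵀ *ᵥ (EA *ᵥ xh) - Epᵀ *ᵥ r))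
        ≤ ‖(Apᵀ * A)⁻¹‖ * e2norm (Apᵀ *ᵥ (EA *ᵥ xh) + Epᵀ *ᵥ (EA *ᵥ xh) - Epᵀ *ᵥ r) :=
          e2norm_mulVec_le _ _
      _ ≤ ‖(Apᵀ * A)⁻¹‖ * (‖Ap‖ * (ε * ‖A‖) * e2norm xh
            + (ε * ‖Ap‖) * (ε * ‖A‖) * e2norm xh + (ε * ‖Ap‖) * e2norm r) := by
          refine mul_le_mul_of_nonneg_left ?_ (norm_nonneg _)
          calc e2norm (Apᵀ *ᵥ (EA *ᵥ xh) + Epᵀ *ᵥ (EA *ᵥ xh) - Epᵀ *ᵥ r)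
              ≤ e2norm (Apᵀ *ᵥ (EA *ᵥ xh) + Epᵀ *ᵥ (EA *ᵥ xh)) + e2norm (Epᵀ *ᵥ r) :=
                e2norm_sub_le _ _
            _ ≤ e2norm (Apᵀ *ᵥ (EA *ᵥ xh)) + e2norm (Epᵀ *ᵥ (EA *ᵥ xh)) + e2norm (Epᵀ *ᵥ r) := by
                have := e2norm_add_le (Apᵀ *ᵥ (EA *ᵥ xh)) (Epᵀ *ᵥ (EA *ᵥ xh))
                linarith
            _ ≤ _ := by linarith [hterm1, hterm2, hterm3]
  -- conclude
  rw [div_le_iff₀ hXpos]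
  have hRHS : κ * ν * ε * (e2norm r / (‖A‖ * e2norm xh) + 1 + ε) * e2norm xh
      = ‖(Apᵀ * A)⁻¹‖ * (‖Ap‖ * (ε * ‖A‖) * e2norm xh
          + (ε * ‖Ap‖) * (ε * ‖A‖) * e2norm xh + (ε * ‖Ap‖) * e2norm r) := by
    rw [hκ, hν]
    field_simp
    ring
  rw [hRHS]
  exact hmain
end

section
/- Let A ∈ ℝ^{m×n} have rank n, let R ∈ ℝ^{n×n} invertible with A_p := A R⁻¹, and suppose all singular values of A_p lie in [1/√(1+ε), 1/√(1-ε)] for some 0 < ε < 1. Then √((1-ε)/(1+ε))·κ(A) ≤ κ(R) ≤ √((1+ε)/(1-ε))·κ(A), and 1 ≤ κ(A_pᵀA_p) ≤ (1+ε)/(1-ε), and √((1-ε)/(1+ε))·κ(A) ≤ κ(A_pᵀA) ≤ √((1+ε)/(1-ε))·κ(A). -/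
open Matrix
open scoped Matrix.Norms.L2Operator

namespace SV
variable {N : ℕ}

noncomputable def mu {H : Matrix (Fin N) (Fin N) ℝ} (hH : H.IsHermitian) (j : Fin N) : ℝ :=
  (((Finset.univ.val.map hH.eigenvalues).sort (· ≥ ·)).getD j 0)

lemma length_sort {H : Matrix (Fin N) (Fin N) ℝ} (hH : H.IsHermitian) :
    (((Finset.univ.val.map hH.eigenvalues).sort (· ≥ ·))).length = N := by
  simp [Multiset.length_sort]

lemma mu_eq_get {H : Matrix (Fin N) (Fin N) ℝ} (hH : H.IsHermitian) (j : Fin N) :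
    mu hH j = (((Finset.univ.val.map hH.eigenvalues).sort (· ≥ ·))).get
      (Fin.cast (length_sort hH).symm j) := by
  rw [mu, List.getD_eq_getElem?_getD, List.getElem?_eq_getElem (by rw [length_sort]; exact j.isLt)]
  simp

lemma mu_antitone {H : Matrix (Fin N) (Fin N) ℝ} (hH : H.IsHermitian) {j k : Fin N}
    (hjk : j ≤ k) : mu hH k ≤ mu hH j := by
  rcases eq_or_lt_of_le hjk with h | h
  · rw [h]
  · rw [mu_eq_get, mu_eq_get]
    exact (Multiset.pairwise_sort _ (· ≥ ·)).rel_get_of_lt (by simpa using h)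

lemma exists_perm_aux (f g : Fin N → ℝ) (h : (List.ofFn f).Perm (List.ofFn g)) :
    ∃ e : Equiv.Perm (Fin N), ∀ j, f j = g (e j) := by
  classical
  let τf := Tuple.sort f
  let τg := Tuple.sort g
  have hsf : List.Pairwise (· ≤ ·) (List.ofFn (f ∘ τf)) := by
    exact (List.sortedLE_ofFn_iff.mpr (Tuple.monotone_sort f)).pairwise
  have hsg : List.Pairwise (· ≤ ·) (List.ofFn (g ∘ τg)) := by
    exact (List.sortedLE_ofFn_iff.mpr (Tuple.monotone_sort g)).pairwise
  have hperm : (List.ofFn (f ∘ τf)).Perm (List.ofFn (g ∘ τg)) :=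
    ((τf.ofFn_comp_perm f).trans h).trans (τg.ofFn_comp_perm g).symm
  have heq : (List.ofFn (f ∘ τf)) = (List.ofFn (g ∘ τg)) :=
    List.Perm.eq_of_pairwise' hsf hsg hperm
  have hfun : f ∘ ⇑τf = g ∘ ⇑τg := List.ofFn_inj.mp heq
  refine ⟨τf.symm.trans τg, fun j => ?_⟩
  have := congrFun hfun (τf.symm j)
  simpa using this

lemma exists_perm {H : Matrix (Fin N) (Fin N) ℝ} (hH : H.IsHermitian) :
    ∃ e : Equiv.Perm (Fin N), ∀ j, mu hH j = hH.eigenvalues (e j) := by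
  classical
  set l := ((Finset.univ.val.map hH.eigenvalues).sort (· ≥ ·)) with hl
  have hml : (l : Multiset ℝ) = Finset.univ.val.map hH.eigenvalues :=
    Multiset.sort_eq _ _
  have hperm1 : l.Perm (List.ofFn hH.eigenvalues) := by
    rw [← Multiset.coe_eq_coe]
    rw [hml, List.ofFn_eq_map]
    rfl
  have hofn : List.ofFn (fun j => mu hH j) = l := by
    apply List.ext_get
    · simp [hl, length_sort hH]
    · intro i h1 h2
      simp only [List.get_ofFn]
      rw [mu_eq_get]
      rfl
  have : (List.ofFn (fun j => mu hH j)).Perm (List.ofFn hH.eigenvalues) := by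
    rw [hofn]; exact hperm1
  exact exists_perm_aux _ _ this

noncomputable def coordOf {H : Matrix (Fin N) (Fin N) ℝ} (hH : H.IsHermitian)
    (x : Fin N → ℝ) (i : Fin N) : ℝ :=
  (WithLp.equiv 2 (Fin N → ℝ)) (hH.eigenvectorBasis i) ⬝ᵥ x

lemma repr_eq_coord {H : Matrix (Fin N) (Fin N) ℝ} (hH : H.IsHermitian)
    (x : Fin N → ℝ) (i : Fin N) :
    hH.eigenvectorBasis.repr ((WithLp.equiv 2 (Fin N → ℝ)).symm x) i = coordOf hH x i := by
  rw [OrthonormalBasis.repr_apply_apply, coordOf]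
  rw [PiLp.inner_apply]
  simp [dotProduct, RCLike.inner_apply, mul_comm]

lemma dot_eq_inner (x y : Fin N → ℝ) :
    x ⬝ᵥ y = (inner ℝ ((WithLp.equiv 2 (Fin N → ℝ)).symm x)
      ((WithLp.equiv 2 (Fin N → ℝ)).symm y) : ℝ) := by
  rw [PiLp.inner_apply]
  simp [dotProduct, RCLike.inner_apply, mul_comm]

lemma coord_mulVec {H : Matrix (Fin N) (Fin N) ℝ} (hH : H.IsHermitian)
    (x : Fin N → ℝ) (i : Fin N) :
    coordOf hH (H *ᵥ x) i = hH.eigenvalues i * coordOf hH x i := by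
  rw [coordOf, coordOf]
  rw [Matrix.dotProduct_mulVec]
  have hsym : H.vecMul ((WithLp.equiv 2 (Fin N → ℝ)) (hH.eigenvectorBasis i))
      = H *ᵥ ((WithLp.equiv 2 (Fin N → ℝ)) (hH.eigenvectorBasis i)) := by
    rw [← Matrix.mulVec_transpose]
    have h2 : Hᵀ = H := by
      ext a b
      have := congrFun (congrFun hH.eq a) b
      simpa using this
    rw [h2]
  rw [hsym]
  erw [hH.mulVec_eigenvectorBasis]
  simp [smul_dotProduct]

lemma dot_self_eq_sum_coord {H : Matrix (Fin N) (Fin N) ℝ} (hH : H.IsHermitian)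
    (x : Fin N → ℝ) : x ⬝ᵥ x = ∑ i, (coordOf hH x i)^2 := by
  rw [dot_eq_inner]
  rw [← (hH.eigenvectorBasis.repr).inner_map_map]
  rw [PiLp.inner_apply]
  simp only [RCLike.inner_apply, starRingEnd_apply, star_trivial]
  exact Finset.sum_congr rfl fun i _ => by rw [repr_eq_coord, sq]

lemma dot_mulVec_eq_sum {H : Matrix (Fin N) (Fin N) ℝ} (hH : H.IsHermitian)
    (x : Fin N → ℝ) :
    x ⬝ᵥ (H *ᵥ x) = ∑ i, hH.eigenvalues i * (coordOf hH x i)^2 := by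
  rw [dot_eq_inner]
  rw [← (hH.eigenvectorBasis.repr).inner_map_map]
  rw [PiLp.inner_apply]
  simp only [RCLike.inner_apply, starRingEnd_apply, star_trivial]
  refine Finset.sum_congr rfl fun i _ => ?_
  rw [repr_eq_coord, repr_eq_coord, coord_mulVec]
  ring

lemma mulVec_dot_mulVec {H : Matrix (Fin N) (Fin N) ℝ} (hH : H.IsHermitian)
    (x : Fin N → ℝ) :
    (H *ᵥ x) ⬝ᵥ (H *ᵥ x) = ∑ i, (hH.eigenvalues i)^2 * (coordOf hH x i)^2 := by
  rw [dot_self_eq_sum_coord hH]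
  refine Finset.sum_congr rfl fun i _ => ?_
  rw [coord_mulVec]
  ring

lemma real_conjTranspose {m k : ℕ} (M : Matrix (Fin m) (Fin k) ℝ) : Mᴴ = Mᵀ := by
  ext a b; simp [Matrix.conjTranspose_apply]

lemma dot_gram {m : ℕ} (M : Matrix (Fin m) (Fin N) ℝ) (x : Fin N → ℝ) :
    x ⬝ᵥ ((Mᴴ * M) *ᵥ x) = (M *ᵥ x) ⬝ᵥ (M *ᵥ x) := by
  rw [real_conjTranspose, ← Matrix.mulVec_mulVec, Matrix.dotProduct_mulVec,
    Matrix.vecMul_transpose]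

noncomputable def spanS {H : Matrix (Fin N) (Fin N) ℝ} (hH : H.IsHermitian)
    (K : Finset (Fin N)) : Submodule ℝ (EuclideanSpace ℝ (Fin N)) :=
  Submodule.span ℝ (Set.range fun i : K => hH.eigenvectorBasis i)

lemma finrank_spanS {H : Matrix (Fin N) (Fin N) ℝ} (hH : H.IsHermitian)
    (K : Finset (Fin N)) : Module.finrank ℝ (spanS hH K) = K.card := by
  have hli : LinearIndependent ℝ (fun i : K => hH.eigenvectorBasis i) :=
    (hH.eigenvectorBasis.orthonormal.linearIndependent).comp _ Subtype.val_injective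
  rw [spanS, finrank_span_eq_card hli, Fintype.card_coe]

lemma repr_eq_zero_of_mem_spanS {H : Matrix (Fin N) (Fin N) ℝ} (hH : H.IsHermitian)
    {K : Finset (Fin N)} {x : EuclideanSpace ℝ (Fin N)} (hx : x ∈ spanS hH K)
    {i : Fin N} (hi : i ∉ K) : hH.eigenvectorBasis.repr x i = 0 := by
  induction hx using Submodule.span_induction with
  | mem y hy =>
    obtain ⟨⟨i', hi'⟩, rfl⟩ := hy
    rw [OrthonormalBasis.repr_self]
    rw [EuclideanSpace.single_apply]
    simp only [ite_eq_right_iff]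
    rintro rfl; exact absurd hi' hi
  | zero => simp
  | add y z _ _ hy hz => simp [hy, hz]
  | smul a y _ hy => simp [hy]

lemma mu_le_mul {P Q : Matrix (Fin N) (Fin N) ℝ} (hP : P.IsHermitian) (hQ : Q.IsHermitian)
    {K : ℝ} (hK : 0 ≤ K)
    (h : ∀ x : Fin N → ℝ, x ⬝ᵥ (P *ᵥ x) ≤ K * (x ⬝ᵥ (Q *ᵥ x))) (j : Fin N) :
    mu hP j ≤ K * mu hQ j := by
  classical
  obtain ⟨eP, heP⟩ := exists_perm hP
  obtain ⟨eQ, heQ⟩ := exists_perm hQ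
  set KP : Finset (Fin N) := (Finset.Iic j).image eP with hKP
  set KQ : Finset (Fin N) := (Finset.Ici j).image eQ with hKQ
  have hcardP : KP.card = j.val + 1 := by
    rw [hKP, Finset.card_image_of_injective _ eP.injective, Fin.card_Iic]
  have hcardQ : KQ.card = N - j.val := by
    rw [hKQ, Finset.card_image_of_injective _ eQ.injective, Fin.card_Ici]
  set S := spanS hP KP
  set T := spanS hQ KQ
  have hfS : Module.finrank ℝ S = j.val + 1 := by rw [finrank_spanS, hcardP]
  have hfT : Module.finrank ℝ T = N - j.val := by rw [finrank_spanS, hcardQ]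
  have hne : S ⊓ T ≠ ⊥ := by
    intro hbot
    have h1 := Submodule.finrank_sup_add_finrank_inf_eq S T
    have h2 : Module.finrank ℝ ↥(S ⊔ T) ≤ N := by
      have := Submodule.finrank_le (S ⊔ T)
      rwa [finrank_euclideanSpace, Fintype.card_fin] at this
    rw [hbot] at h1
    simp only [finrank_bot] at h1
    rw [hfS, hfT] at h1
    have := j.isLt
    omega
  obtain ⟨x, hxmem, hxne⟩ := Submodule.exists_mem_ne_zero_of_ne_bot hne
  obtain ⟨hxS, hxT⟩ := hxmem
  set xf : Fin N → ℝ := (WithLp.equiv 2 (Fin N → ℝ)) x with hxf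
  have hxsymm : (WithLp.equiv 2 (Fin N → ℝ)).symm xf = x := Equiv.symm_apply_apply _ _
  have hsuppP : ∀ i, i ∉ KP → coordOf hP xf i = 0 := fun i hi => by
    rw [← repr_eq_coord, hxsymm]; exact repr_eq_zero_of_mem_spanS hP hxS hi
  have hsuppQ : ∀ i, i ∉ KQ → coordOf hQ xf i = 0 := fun i hi => by
    rw [← repr_eq_coord, hxsymm]; exact repr_eq_zero_of_mem_spanS hQ hxT hi
  have hspos : 0 < xf ⬝ᵥ xf := by
    have hfne : xf ≠ 0 := by
      intro h0
      apply hxne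
      rw [← hxsymm, h0]
      simp
    obtain ⟨i0, hi0⟩ : ∃ i, xf i ≠ 0 := by
      by_contra hc
      push_neg at hc
      exact hfne (funext hc)
    rw [dotProduct]
    apply Finset.sum_pos' (fun i _ => mul_self_nonneg _)
    exact ⟨i0, Finset.mem_univ _, mul_self_pos.mpr hi0⟩
  have hlow : mu hP j * (xf ⬝ᵥ xf) ≤ xf ⬝ᵥ (P *ᵥ xf) := by
    rw [dot_mulVec_eq_sum hP, dot_self_eq_sum_coord hP, Finset.mul_sum]
    refine Finset.sum_le_sum fun i _ => ?_
    by_cases hi : i ∈ KP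
    · obtain ⟨i', hi', rfl⟩ := Finset.mem_image.mp hi
      have : mu hP j ≤ hP.eigenvalues (eP i') := by
        rw [← heP i']; exact mu_antitone hP (Finset.mem_Iic.mp hi')
      exact mul_le_mul_of_nonneg_right this (sq_nonneg _)
    · rw [hsuppP i hi]; ring_nf; exact le_refl _
  have hhigh : xf ⬝ᵥ (Q *ᵥ xf) ≤ mu hQ j * (xf ⬝ᵥ xf) := by
    rw [dot_mulVec_eq_sum hQ, dot_self_eq_sum_coord hQ, Finset.mul_sum]
    refine Finset.sum_le_sum fun i _ => ?_
    by_cases hi : i ∈ KQ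
    · obtain ⟨i', hi', rfl⟩ := Finset.mem_image.mp hi
      have : hQ.eigenvalues (eQ i') ≤ mu hQ j := by
        rw [← heQ i']; exact mu_antitone hQ (Finset.mem_Ici.mp hi')
      exact mul_le_mul_of_nonneg_right this (sq_nonneg _)
    · rw [hsuppQ i hi]; ring_nf; exact le_refl _
  have hchain : mu hP j * (xf ⬝ᵥ xf) ≤ (K * mu hQ j) * (xf ⬝ᵥ xf) := by
    calc mu hP j * (xf ⬝ᵥ xf) ≤ xf ⬝ᵥ (P *ᵥ xf) := hlow
    _ ≤ K * (xf ⬝ᵥ (Q *ᵥ xf)) := h xf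
    _ ≤ K * (mu hQ j * (xf ⬝ᵥ xf)) := mul_le_mul_of_nonneg_left hhigh hK
    _ = (K * mu hQ j) * (xf ⬝ᵥ xf) := by ring
  exact le_of_mul_le_mul_right hchain hspos

lemma mu_gram_nonneg {m : ℕ} (M : Matrix (Fin m) (Fin N) ℝ) (j : Fin N) :
    0 ≤ mu (Matrix.isHermitian_conjTranspose_mul_self M) j := by
  obtain ⟨e, he⟩ := exists_perm (Matrix.isHermitian_conjTranspose_mul_self M)
  rw [he j]
  exact (Matrix.posSemidef_conjTranspose_mul_self M).eigenvalues_nonneg (e j)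

lemma ratio_le {a1 a2 r1 r2 u v : ℝ} (ha1 : 0 ≤ a1) (hr1 : 0 ≤ r1)
    (hu : 0 ≤ u) (hv : 0 < v) (ha2 : 0 < a2)
    (h1 : r1 ≤ u * a1) (h2 : v * a2 ≤ r2) :
    Real.sqrt r1 / Real.sqrt r2 ≤ Real.sqrt (u / v) * (Real.sqrt a1 / Real.sqrt a2) := by
  have hva2 : 0 < v * a2 := mul_pos hv ha2
  have hr2 : 0 < r2 := lt_of_lt_of_le hva2 h2
  rw [← Real.sqrt_div hr1, ← Real.sqrt_div ha1, ← Real.sqrt_mul (by positivity)]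
  apply Real.sqrt_le_sqrt
  have : u / v * (a1 / a2) = (u * a1) / (v * a2) := by
    field_simp
  rw [this]
  exact div_le_div₀ (by positivity) h1 hva2 h2

lemma kappa_both {a1 a2 r1 r2 t1 t2 : ℝ} (ha1 : 0 < a1) (ha2 : 0 < a2) (hr1 : 0 ≤ r1)
    (ht1 : 0 < t1) (ht2 : 0 < t2)
    (hl1 : t1 * a1 ≤ r1) (hu1 : r1 ≤ t2 * a1) (hl2 : t1 * a2 ≤ r2) (hu2 : r2 ≤ t2 * a2) :
    Real.sqrt (t1/t2) * (Real.sqrt a1 / Real.sqrt a2) ≤ Real.sqrt r1 / Real.sqrt r2 ∧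
    Real.sqrt r1 / Real.sqrt r2 ≤ Real.sqrt (t2/t1) * (Real.sqrt a1 / Real.sqrt a2) := by
  have hr2 : 0 < r2 := lt_of_lt_of_le (by positivity) hl2
  constructor
  · have hk : Real.sqrt a1 / Real.sqrt a2
        ≤ Real.sqrt ((1/t1)/(1/t2)) * (Real.sqrt r1 / Real.sqrt r2) := by
      apply ratio_le hr1 (le_of_lt ha1) (by positivity) (by positivity) hr2
      · rw [one_div, ← div_eq_inv_mul]
        rw [le_div_iff₀ ht1]
        linarith [hl1]
      · rw [one_div, ← div_eq_inv_mul, div_le_iff₀ ht2]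
        linarith [hu2]
    have hdd : (1/t1)/(1/t2) = t2/t1 := by field_simp
    rw [hdd] at hk
    have hts : Real.sqrt (t1/t2) = (Real.sqrt (t2/t1))⁻¹ := by
      rw [← Real.sqrt_inv, inv_div]
    rw [hts, inv_mul_le_iff₀ (Real.sqrt_pos.mpr (by positivity))]
    exact hk
  · exact ratio_le (le_of_lt ha1) hr1 (le_of_lt ht2) ht1 ha2 hu1 hl2

end SV

open SV in
theorem stmt15 {m n : ℕ} (A : Matrix (Fin m) (Fin (n+1)) ℝ)
    (R : Matrix (Fin (n+1)) (Fin (n+1)) ℝ)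
    (hrank : A.rank = n + 1) (hR : IsUnit R.det)
    (Ap : Matrix (Fin m) (Fin (n+1)) ℝ) (hAp : Ap = A * R⁻¹)
    (ε : ℝ) (hε0 : 0 < ε) (hε1 : ε < 1)
    (hσ : ∀ j : Fin (n+1),
      1 / Real.sqrt (1 + ε) ≤ sval Ap j ∧ sval Ap j ≤ 1 / Real.sqrt (1 - ε)) :
    (Real.sqrt ((1 - ε) / (1 + ε)) * condNum A ≤ condNum R ∧
      condNum R ≤ Real.sqrt ((1 + ε) / (1 - ε)) * condNum A) ∧
    (1 ≤ condNum (Apᵀ * Ap) ∧ condNum (Apᵀ * Ap) ≤ (1 + ε) / (1 - ε)) ∧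
    (Real.sqrt ((1 - ε) / (1 + ε)) * condNum A ≤ condNum (Apᵀ * A) ∧
      condNum (Apᵀ * A) ≤ Real.sqrt ((1 + ε) / (1 - ε)) * condNum A) := by
  classical
  have h1e : (0:ℝ) < 1 + ε := by linarith
  have h1e' : (0:ℝ) < 1 - ε := by linarith
  set c : ℝ := 1 / (1 + ε) with hc
  set C : ℝ := 1 / (1 - ε) with hC
  have hcpos : 0 < c := by positivity
  have hCpos : 0 < C := by positivity
  -- hermitian proofs
  set hGm := Matrix.isHermitian_conjTranspose_mul_self Ap with hGmdef
  set hA := Matrix.isHermitian_conjTranspose_mul_self A with hAdef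
  set hRg := Matrix.isHermitian_conjTranspose_mul_self R with hRgdef
  set hP2 := Matrix.isHermitian_conjTranspose_mul_self (Apᵀ * Ap) with hP2def
  set hP3 := Matrix.isHermitian_conjTranspose_mul_self (Apᵀ * A) with hP3def
  -- sval as sqrt mu
  have hsval : ∀ (k : ℕ) (M : Matrix (Fin k) (Fin (n+1)) ℝ) (j : Fin (n+1)),
      sval M j = Real.sqrt (mu (Matrix.isHermitian_conjTranspose_mul_self M) j) := by
    intro k M j; rfl
  -- basic identities
  have hApR : Ap * R = A := by
    rw [hAp, Matrix.mul_assoc, Matrix.nonsing_inv_mul R hR, Matrix.mul_one]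
  -- hσ squared: c ≤ mu hGm j ≤ C
  have hmuGm : ∀ j, c ≤ mu hGm j ∧ mu hGm j ≤ C := by
    intro j
    obtain ⟨hl, hu⟩ := hσ j
    rw [hsval] at hl hu
    have hnn : 0 ≤ mu hGm j := mu_gram_nonneg Ap j
    constructor
    · have := pow_le_pow_left₀ (by positivity) hl 2
      rwa [div_pow, one_pow, Real.sq_sqrt (le_of_lt h1e), Real.sq_sqrt hnn] at this
    · have := pow_le_pow_left₀ (Real.sqrt_nonneg _) hu 2
      rwa [div_pow, one_pow, Real.sq_sqrt (le_of_lt h1e'), Real.sq_sqrt hnn] at this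
  -- eigenvalue bounds for Gm
  have heigGm : ∀ i, c ≤ hGm.eigenvalues i ∧ hGm.eigenvalues i ≤ C := by
    obtain ⟨e, he⟩ := exists_perm hGm
    intro i
    have := hmuGm (e.symm i)
    rwa [he (e.symm i), Equiv.apply_symm_apply] at this
  -- quadratic form of Gm in coordinates
  have hqGm_low : ∀ y : Fin (n+1) → ℝ, c * (y ⬝ᵥ y) ≤ y ⬝ᵥ ((Apᴴ * Ap) *ᵥ y) := by
    intro y
    rw [dot_mulVec_eq_sum hGm, dot_self_eq_sum_coord hGm, Finset.mul_sum]
    exact Finset.sum_le_sum fun i _ =>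
      mul_le_mul_of_nonneg_right (heigGm i).1 (sq_nonneg _)
  have hqGm_high : ∀ y : Fin (n+1) → ℝ, y ⬝ᵥ ((Apᴴ * Ap) *ᵥ y) ≤ C * (y ⬝ᵥ y) := by
    intro y
    rw [dot_mulVec_eq_sum hGm, dot_self_eq_sum_coord hGm, Finset.mul_sum]
    exact Finset.sum_le_sum fun i _ =>
      mul_le_mul_of_nonneg_right (heigGm i).2 (sq_nonneg _)
  -- ‖A x‖² = (Rx) ⬝ Gm (Rx)
  have hAx : ∀ x : Fin (n+1) → ℝ,
      x ⬝ᵥ ((Aᴴ * A) *ᵥ x) = (R *ᵥ x) ⬝ᵥ ((Apᴴ * Ap) *ᵥ (R *ᵥ x)) := by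
    intro x
    rw [dot_gram, dot_gram, ← hApR, ← Matrix.mulVec_mulVec]
  have hRx : ∀ x : Fin (n+1) → ℝ,
      x ⬝ᵥ ((Rᴴ * R) *ᵥ x) = (R *ᵥ x) ⬝ᵥ (R *ᵥ x) := fun x => dot_gram R x
  -- Part 1 engine bounds
  have hE1a : ∀ j, mu hA j ≤ C * mu hRg j := by
    apply mu_le_mul hA hRg (le_of_lt hCpos)
    intro x
    rw [hAx, hRx]
    exact hqGm_high (R *ᵥ x)
  have hE1b : ∀ j, mu hRg j ≤ (1+ε) * mu hA j := by
    apply mu_le_mul hRg hA (le_of_lt h1e)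
    intro x
    rw [hAx, hRx]
    have := hqGm_low (R *ᵥ x)
    calc (R *ᵥ x) ⬝ᵥ (R *ᵥ x) = (1+ε) * (c * ((R *ᵥ x) ⬝ᵥ (R *ᵥ x))) := by
          rw [hc]; field_simp
    _ ≤ (1+ε) * ((R *ᵥ x) ⬝ᵥ ((Apᴴ * Ap) *ᵥ (R *ᵥ x))) :=
          mul_le_mul_of_nonneg_left this (le_of_lt h1e)
  -- positivity of mu hA
  have heigApos : ∀ i, 0 < hA.eigenvalues i := by
    intro i
    have hnn : 0 ≤ hA.eigenvalues i :=
      (Matrix.posSemidef_conjTranspose_mul_self A).eigenvalues_nonneg i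
    rcases lt_or_eq_of_le hnn with h | h
    · exact h
    · exfalso
      have hr : (Aᴴ * A).rank = n + 1 := by
        rw [Matrix.rank_conjTranspose_mul_self, hrank]
      rw [hA.rank_eq_card_non_zero_eigs] at hr
      have := Fintype.card_subtype_lt (p := fun i => hA.eigenvalues i ≠ 0)
        (x := i) (by simpa using h.symm)
      rw [hr] at this
      simp [Fintype.card_fin] at this
  have hmuApos : ∀ j, 0 < mu hA j := by
    obtain ⟨e, he⟩ := exists_perm hA
    intro j
    rw [he j]
    exact heigApos (e j)
  -- Part 3 matrices
  have hP3mat : Apᵀ * A = (Apᴴ * Ap) * R := by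
    rw [real_conjTranspose, ← hApR, Matrix.mul_assoc]
  have hqP3 : ∀ x : Fin (n+1) → ℝ,
      x ⬝ᵥ (((Apᵀ * A)ᴴ * (Apᵀ * A)) *ᵥ x)
        = ((Apᴴ * Ap) *ᵥ (R *ᵥ x)) ⬝ᵥ ((Apᴴ * Ap) *ᵥ (R *ᵥ x)) := by
    intro x
    rw [dot_gram, hP3mat, ← Matrix.mulVec_mulVec]
  -- termwise: λ² vs λ
  have hsq_le : ∀ y : Fin (n+1) → ℝ,
      ((Apᴴ * Ap) *ᵥ y) ⬝ᵥ ((Apᴴ * Ap) *ᵥ y) ≤ C * (y ⬝ᵥ ((Apᴴ * Ap) *ᵥ y)) := by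
    intro y
    rw [mulVec_dot_mulVec hGm, dot_mulVec_eq_sum hGm, Finset.mul_sum]
    refine Finset.sum_le_sum fun i _ => ?_
    have h1 := (heigGm i).1
    have h2 := (heigGm i).2
    have : (hGm.eigenvalues i)^2 ≤ C * hGm.eigenvalues i := by nlinarith
    calc (hGm.eigenvalues i)^2 * (coordOf hGm y i)^2
        ≤ (C * hGm.eigenvalues i) * (coordOf hGm y i)^2 :=
          mul_le_mul_of_nonneg_right this (sq_nonneg _)
    _ = C * (hGm.eigenvalues i * (coordOf hGm y i)^2) := by ring
  have hle_sq : ∀ y : Fin (n+1) → ℝ,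
      y ⬝ᵥ ((Apᴴ * Ap) *ᵥ y) ≤ (1+ε) * (((Apᴴ * Ap) *ᵥ y) ⬝ᵥ ((Apᴴ * Ap) *ᵥ y)) := by
    intro y
    rw [mulVec_dot_mulVec hGm, dot_mulVec_eq_sum hGm, Finset.mul_sum]
    refine Finset.sum_le_sum fun i _ => ?_
    have h1 := (heigGm i).1
    have : hGm.eigenvalues i ≤ (1+ε) * (hGm.eigenvalues i)^2 := by
      have hcc : c * (1+ε) = 1 := by rw [hc]; field_simp
      nlinarith
    calc hGm.eigenvalues i * (coordOf hGm y i)^2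
        ≤ ((1+ε) * (hGm.eigenvalues i)^2) * (coordOf hGm y i)^2 :=
          mul_le_mul_of_nonneg_right this (sq_nonneg _)
    _ = (1+ε) * ((hGm.eigenvalues i)^2 * (coordOf hGm y i)^2) := by ring
  -- Part 3 engine bounds
  have hE3a : ∀ j, mu hP3 j ≤ C * mu hA j := by
    apply mu_le_mul hP3 hA (le_of_lt hCpos)
    intro x
    rw [hqP3, hAx]
    exact hsq_le (R *ᵥ x)
  have hE3b : ∀ j, mu hA j ≤ (1+ε) * mu hP3 j := by
    apply mu_le_mul hA hP3 (le_of_lt h1e)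
    intro x
    rw [hqP3, hAx]
    exact hle_sq (R *ᵥ x)
  -- Part 2: quadratic form of gram of Apᵀ*Ap
  have hqP2 : ∀ x : Fin (n+1) → ℝ,
      x ⬝ᵥ (((Apᵀ * Ap)ᴴ * (Apᵀ * Ap)) *ᵥ x)
        = ((Apᴴ * Ap) *ᵥ x) ⬝ᵥ ((Apᴴ * Ap) *ᵥ x) := by
    intro x
    rw [dot_gram, real_conjTranspose Ap]
  have hE2a : ∀ j, mu hP2 j ≤ C * mu hGm j := by
    apply mu_le_mul hP2 hGm (le_of_lt hCpos)
    intro x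
    rw [hqP2]
    exact hsq_le x
  have hE2b : ∀ j, mu hGm j ≤ (1+ε) * mu hP2 j := by
    apply mu_le_mul hGm hP2 (le_of_lt h1e)
    intro x
    rw [hqP2]
    exact hle_sq x
  -- abbreviations
  set a1 := mu hA 0 with ha1def
  set a2 := mu hA (Fin.last n) with ha2def
  have ha1pos := hmuApos 0
  have ha2pos := hmuApos (Fin.last n)
  have hr1nn : 0 ≤ mu hRg 0 := mu_gram_nonneg R 0
  have hp1nn : 0 ≤ mu hP3 0 := mu_gram_nonneg (Apᵀ * A) 0
  have hg1nn : 0 ≤ mu hP2 0 := mu_gram_nonneg (Apᵀ * Ap) 0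
  have hg2nn : 0 ≤ mu hP2 (Fin.last n) := mu_gram_nonneg (Apᵀ * Ap) (Fin.last n)
  -- condNum unfolding
  have hcondA : condNum A = Real.sqrt a1 / Real.sqrt a2 := rfl
  have hcondR : condNum R = Real.sqrt (mu hRg 0) / Real.sqrt (mu hRg (Fin.last n)) := rfl
  have hcondP3 : condNum (Apᵀ * A)
      = Real.sqrt (mu hP3 0) / Real.sqrt (mu hP3 (Fin.last n)) := rfl
  have hcondP2 : condNum (Apᵀ * Ap)
      = Real.sqrt (mu hP2 0) / Real.sqrt (mu hP2 (Fin.last n)) := rfl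
  -- rearranged bounds
  have hr_low : ∀ j, (1-ε) * mu hA j ≤ mu hRg j := by
    intro j
    have h' : (1-ε) * mu hA j ≤ (1-ε) * (C * mu hRg j) :=
      mul_le_mul_of_nonneg_left (hE1a j) (le_of_lt h1e')
    calc (1-ε) * mu hA j ≤ (1-ε) * (C * mu hRg j) := h'
    _ = mu hRg j := by rw [hC]; field_simp
  have hr_high : ∀ j, mu hRg j ≤ (1+ε) * mu hA j := hE1b
  have hp_low : ∀ j, c * mu hA j ≤ mu hP3 j := by
    intro j
    have h' : c * mu hA j ≤ c * ((1+ε) * mu hP3 j) :=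
      mul_le_mul_of_nonneg_left (hE3b j) (le_of_lt hcpos)
    calc c * mu hA j ≤ c * ((1+ε) * mu hP3 j) := h'
    _ = mu hP3 j := by rw [hc]; field_simp
  have hp_high : ∀ j, mu hP3 j ≤ C * mu hA j := hE3a
  have hg_low : ∀ j, c * mu hGm j ≤ mu hP2 j := by
    intro j
    have h' : c * mu hGm j ≤ c * ((1+ε) * mu hP2 j) :=
      mul_le_mul_of_nonneg_left (hE2b j) (le_of_lt hcpos)
    calc c * mu hGm j ≤ c * ((1+ε) * mu hP2 j) := h'
    _ = mu hP2 j := by rw [hc]; field_simp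
  have hg2low : c * c ≤ mu hP2 (Fin.last n) :=
    le_trans (mul_le_mul_of_nonneg_left (hmuGm (Fin.last n)).1 (le_of_lt hcpos))
      (hg_low (Fin.last n))
  have hg2pos : 0 < mu hP2 (Fin.last n) :=
    lt_of_lt_of_le (by positivity) hg2low
  have hg1high : mu hP2 0 ≤ C * C :=
    le_trans (hE2a 0) (mul_le_mul_of_nonneg_left (hmuGm 0).2 (le_of_lt hCpos))
  -- part 1
  have hpart1 := kappa_both ha1pos ha2pos hr1nn h1e' h1e
    (hr_low 0) (hr_high 0) (hr_low (Fin.last n)) (hr_high (Fin.last n))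
  -- part 3
  have hpart3 := kappa_both ha1pos ha2pos hp1nn hcpos hCpos
    (hp_low 0) (hp_high 0) (hp_low (Fin.last n)) (hp_high (Fin.last n))
  have hCc : C / c = (1+ε)/(1-ε) := by rw [hc, hC]; field_simp
  have hcC : c / C = (1-ε)/(1+ε) := by rw [hc, hC]; field_simp
  refine ⟨⟨?_, ?_⟩, ⟨?_, ?_⟩, ⟨?_, ?_⟩⟩
  · rw [hcondA, hcondR]; exact hpart1.1
  · rw [hcondA, hcondR]; exact hpart1.2
  · rw [hcondP2, one_le_div (Real.sqrt_pos.mpr hg2pos)]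
    exact Real.sqrt_le_sqrt (mu_antitone hP2 (Fin.zero_le _))
  · rw [hcondP2]
    have h1 : Real.sqrt (mu hP2 0) ≤ C := by
      have := Real.sqrt_le_sqrt hg1high
      rwa [Real.sqrt_mul_self (le_of_lt hCpos)] at this
    have h2 : c ≤ Real.sqrt (mu hP2 (Fin.last n)) := by
      have := Real.sqrt_le_sqrt hg2low
      rwa [Real.sqrt_mul_self (le_of_lt hcpos)] at this
    calc Real.sqrt (mu hP2 0) / Real.sqrt (mu hP2 (Fin.last n))
        ≤ C / c := div_le_div₀ (le_of_lt hCpos) h1 hcpos h2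
    _ = (1+ε)/(1-ε) := hCc
  · rw [hcondA, hcondP3, ← hcC]; exact hpart3.1
  · rw [hcondA, hcondP3, ← hCc]; exact hpart3.2
end
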